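/- arXiv:2112.07120 — 2 statements merged into one kernel-verified Lean document; each statement's English description precedes it below -/
import Mathlib

section
/- Fix δ ∈ (0,1) and γ > δ². If c > 0 satisfies e^{cγ} ≥ 1 + δ²(e^c − 1), and f : ℕ × ℕ → ℝ satisfies f(i,0) = 1 for all i, f(0,j) = 0 for j ≥ 1, 0 ≤ f(i,j), and f(i,j) ≤ f(i−1,j) + δ²(f(i−1,j−1) − f(i−1,j)) for all i,j ≥ 1 (with f(i−1,j−1) ≥ f(i−1,j) ≥ 0), then f(i,j) ≤ e^{c(γi − j)} for all (i,j). -/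
/-!
The bound `g i j = exp (c * (γ * i - j))` is a supersolution of the recursion: since
`g i j = exp c * g i (j + 1)`, one step of the recursion multiplies `g i (j + 1)` by
`1 + δ² (exp c - 1) ≤ exp (c γ)`, which is exactly the growth of `g` from `(i, j + 1)` to
`(i + 1, j + 1)`. As the recursion is a convex combination, hence monotone, any subsolution
lying below `g` on the boundary `i = 0` or `j = 0` lies below `g` everywhere.
-/

open Real

theorem le_of_convex_recursion {p : ℝ} (hp0 : 0 ≤ p) (hp1 : p ≤ 1) {f g : ℕ → ℕ → ℝ}
    (hleft : ∀ i, f i 0 ≤ g i 0) (hbot : ∀ j, f 0 j ≤ g 0 j)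
    (hf : ∀ i j, f (i + 1) (j + 1) ≤ (1 - p) * f i (j + 1) + p * f i j)
    (hg : ∀ i j, (1 - p) * g i (j + 1) + p * g i j ≤ g (i + 1) (j + 1)) :
    ∀ i j, f i j ≤ g i j := by
  intro i
  induction i with
  | zero => exact hbot
  | succ i ih =>
    rintro (_ | j)
    · exact hleft _
    · calc f (i + 1) (j + 1) ≤ (1 - p) * f i (j + 1) + p * f i j := hf i j
        _ ≤ (1 - p) * g i (j + 1) + p * g i j := by
          gcongr <;> apply ih
        _ ≤ g (i + 1) (j + 1) := hg i j

theorem convex_step_exp_le {p c γ : ℝ} (h : 1 + p * (exp c - 1) ≤ exp (c * γ)) (t : ℝ) :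
    (1 - p) * exp t + p * exp (t + c) ≤ exp (t + c * γ) :=
  calc (1 - p) * exp t + p * exp (t + c) = exp t * (1 + p * (exp c - 1)) := by
        rw [exp_add]; ring
    _ ≤ exp t * exp (c * γ) := mul_le_mul_of_nonneg_left h (exp_nonneg t)
    _ = exp (t + c * γ) := (exp_add t _).symm

theorem sdpi_exponential_decay_general
    (δ γ c : ℝ) (hδ0 : 0 < δ) (hδ1 : δ < 1) (hc : 0 < c)
    (hceq : 1 + δ ^ 2 * (Real.exp c - 1) ≤ Real.exp (c * γ))
    (f : ℕ → ℕ → ℝ)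
    (hf0 : ∀ i, f i 0 = 1)
    (hf00 : ∀ j, 1 ≤ j → f 0 j = 0)
    (hrec : ∀ i j, f (i + 1) (j + 1) ≤ f i (j + 1) + δ ^ 2 * (f i j - f i (j + 1))) :
    ∀ i j, f i j ≤ Real.exp (c * (γ * i - j)) := by
  have hδ2 : δ ^ 2 ≤ 1 := by nlinarith
  have hcγ : 0 ≤ c * γ := by
    have : 0 ≤ δ ^ 2 * (exp c - 1) := mul_nonneg (sq_nonneg δ) (by linarith [add_one_le_exp c])
    exact one_le_exp_iff.mp (by linarith)
  refine le_of_convex_recursion (sq_nonneg δ) hδ2 (fun i => ?_) (fun j => ?_)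
    (fun i j => by linear_combination hrec i j) (fun i j => ?_)
  · rw [hf0]
    exact one_le_exp (by simpa [mul_assoc] using mul_nonneg hcγ i.cast_nonneg)
  · rcases j with _ | j
    · simp [hf0]
    · rw [hf00 _ j.succ_pos]
      exact (exp_pos _).le
  · convert convex_step_exp_le hceq (c * (γ * i - (j + 1))) using 3 <;> push_cast <;> ring_nf

theorem sdpi_exponential_decay
    (δ γ c : ℝ) (hδ0 : 0 < δ) (hδ1 : δ < 1) (hγ : δ ^ 2 < γ) (hc : 0 < c)
    (hceq : 1 + δ ^ 2 * (Real.exp c - 1) ≤ Real.exp (c * γ))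
    (f : ℕ → ℕ → ℝ)
    (hf0 : ∀ i, f i 0 = 1)
    (hf00 : ∀ j, 1 ≤ j → f 0 j = 0)
    (hfnn : ∀ i j, 0 ≤ f i j)
    (hfmono : ∀ i j, f i (j + 1) ≤ f i j)
    (hrec : ∀ i j, f (i + 1) (j + 1) ≤ f i (j + 1) + δ ^ 2 * (f i j - f i (j + 1))) :
    ∀ i j, f i j ≤ Real.exp (c * (γ * i - j)) :=
  sdpi_exponential_decay_general δ γ c hδ0 hδ1 hc hceq f hf0 hf00 hrec
end

section
/- Let c > 1 and define a sequence by ε₀ ≤ (1/(4c))·3⁻⁸ and ε_l ≤ (1/8)(l+2)⁸ ε_{l−1}² for l ≥ 1. Then ε_l ≤ (c^{−2^l}/4)·(l+3)⁻⁸ for all l ≥ 0. -/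
/-! A nonnegative sequence with `ε_{l+1} ≤ a_l ε_l²` stays below any sequence `B` with
`a_l B_l² ≤ B_{l+1}` that starts above it. For `B_l = 1 / (4 c^(2^l) (l+3)^8)` and
`a_l = (l+3)^8 / 8` one gets `a_l B_l² = 1 / (128 c^(2^(l+1)) (l+3)^8) ≤ B_{l+1}`, because
`((l+4)/(l+3))^8 ≤ (4/3)^8 < 32`. -/

theorem le_of_le_mul_sq_of_mul_sq_le {ε a B : ℕ → ℝ} (hε : ∀ n, 0 ≤ ε n) (ha : ∀ n, 0 ≤ a n)
    (h0 : ε 0 ≤ B 0) (hε_succ : ∀ n, ε (n + 1) ≤ a n * ε n ^ 2)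
    (hB_succ : ∀ n, a n * B n ^ 2 ≤ B (n + 1)) (n : ℕ) : ε n ≤ B n := by
  induction n with
  | zero => exact h0
  | succ n ih =>
    calc ε (n + 1) ≤ a n * ε n ^ 2 := hε_succ n
      _ ≤ a n * B n ^ 2 := mul_le_mul_of_nonneg_left (pow_le_pow_left₀ (hε n) ih 2) (ha n)
      _ ≤ B (n + 1) := hB_succ n

theorem add_four_pow_eight_le (t : ℝ) (ht : 0 ≤ t) : (t + 4) ^ 8 ≤ 32 * (t + 3) ^ 8 :=
  calc (t + 4) ^ 8 ≤ (4 / 3 * (t + 3)) ^ 8 := by gcongr; linarith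
    _ = (4 / 3) ^ 8 * (t + 3) ^ 8 := mul_pow _ _ _
    _ ≤ 32 * (t + 3) ^ 8 := by gcongr; norm_num

theorem multibit_bound_step (x t : ℝ) (ht : 0 ≤ t) :
    1 / 8 * (t + 3) ^ 8 * (1 / (4 * x) * (1 / (t + 3) ^ 8)) ^ 2
      ≤ 1 / (4 * x ^ 2) * (1 / (t + 4) ^ 8) := by
  have ht3 : 0 < (t + 3) ^ 8 := by positivity
  calc 1 / 8 * (t + 3) ^ 8 * (1 / (4 * x) * (1 / (t + 3) ^ 8)) ^ 2
      = 1 / (4 * x ^ 2) * (1 / (32 * (t + 3) ^ 8)) := by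
        field_simp
        ring
    _ ≤ 1 / (4 * x ^ 2) * (1 / (t + 4) ^ 8) := by
        gcongr
        exact add_four_pow_eight_le t ht

theorem multibit_error_induction_general
    (c : ℝ) (ε : ℕ → ℝ) (hnn : ∀ l, 0 ≤ ε l)
    (h0 : ε 0 ≤ 1 / (4 * c) * (1 / 3 ^ 8))
    (hrec : ∀ l : ℕ, 1 ≤ l → ε l ≤ 1 / 8 * ((l : ℝ) + 2) ^ 8 * ε (l - 1) ^ 2) :
    ∀ l : ℕ, ε l ≤ 1 / (4 * c ^ (2 ^ l)) * (1 / ((l : ℝ) + 3) ^ 8) := by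
  refine le_of_le_mul_sq_of_mul_sq_le (a := fun n => 1 / 8 * ((n : ℝ) + 3) ^ 8) hnn
    (fun n => by positivity) (by simpa using h0) (fun n => ?_) (fun n => ?_)
  · have h := hrec (n + 1) n.succ_pos
    rw [Nat.add_sub_cancel] at h
    convert h using 4
    push_cast
    ring
  · rw [pow_succ 2 n, pow_mul c]
    convert multibit_bound_step (c ^ 2 ^ n) n n.cast_nonneg using 4
    push_cast
    ring

theorem multibit_error_induction
    (c : ℝ) (hc : 1 < c) (ε : ℕ → ℝ) (hnn : ∀ l, 0 ≤ ε l)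
    (h0 : ε 0 ≤ 1 / (4 * c) * (1 / 3 ^ 8))
    (hrec : ∀ l : ℕ, 1 ≤ l → ε l ≤ 1 / 8 * ((l : ℝ) + 2) ^ 8 * ε (l - 1) ^ 2) :
    ∀ l : ℕ, ε l ≤ 1 / (4 * c ^ (2 ^ l)) * (1 / ((l : ℝ) + 3) ^ 8) :=
  multibit_error_induction_general c ε hnn h0 hrec
end
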